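/- arXiv:1302.3992 — 2 statements merged into one kernel-verified Lean document; each statement's English description precedes it below -/
import Mathlib

section
/- Let A be an associative algebra over a field of characteristic zero and let M₃ be the two-sided ideal generated by triple commutators [a,[b,c]]. Then the symmetrized product a⋆b := (ab+ba)/2 descends to an associative and commutative product on A/M₃. -/
/-!
`M₃` is a two-sided ideal, so the bilinear product `⋆` respects congruence modulo `M₃`.
The associator of `⋆` is a triple commutator, `(a ⋆ b) ⋆ c - a ⋆ (b ⋆ c) = ¼ [b, [a, c]]`,
which lies in `L₃ ⊆ M₃`.
-/

open Submodule

variable (K : Type*) (A : Type*)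

/-- Lower central series Lie ideals: L₁ = A, Lₖ = [A, Lₖ₋₁]. -/
def lcs [CommRing K] [Ring A] [Algebra K A] : ℕ → Submodule K A
  | 0 => ⊤
  | 1 => ⊤
  | (k+2) => Submodule.span K {x : A | ∃ a : A, ∃ l ∈ lcs (k+1), x = a * l - l * a}

/-- Lower central series two-sided ideals Mₖ = A·Lₖ·A. -/
def lcsM [CommRing K] [Ring A] [Algebra K A] (k : ℕ) : Submodule K A :=
  Submodule.span K {x : A | ∃ p q : A, ∃ l ∈ lcs K A k, x = p * l * q}

/-- The symmetrized (star) product `a⋆b = (ab+ba)/2`. -/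
def starP (K : Type*) {A : Type*} [Field K] [Ring A] [Algebra K A] (a b : A) : A :=
  (1/2 : K) • (a * b + b * a)

section LowerCentralSeries

variable {K A : Type*} [CommRing K] [Ring A] [Algebra K A] {k : ℕ}

theorem lie_mem_lcs_succ_succ (a : A) {l : A} (hl : l ∈ lcs K A (k + 1)) :
    ⁅a, l⁆ ∈ lcs K A (k + 2) :=
  subset_span ⟨a, l, hl, Ring.lie_def a l⟩

theorem lcs_le_lcsM : lcs K A k ≤ lcsM K A k := fun l hl =>
  subset_span ⟨1, 1, l, hl, by rw [one_mul, mul_one]⟩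

theorem lie_lie_mem_lcsM_three (a b c : A) : ⁅a, ⁅b, c⁆⁆ ∈ lcsM K A 3 :=
  lcs_le_lcsM <| lie_mem_lcs_succ_succ a <| lie_mem_lcs_succ_succ b (mem_top : c ∈ ⊤)

theorem lcsM.mul_mem_left {x : A} (hx : x ∈ lcsM K A k) (r : A) : r * x ∈ lcsM K A k := by
  induction hx using span_induction with
  | mem y hy =>
    obtain ⟨p, q, l, hl, rfl⟩ := hy
    exact subset_span ⟨r * p, q, l, hl, by noncomm_ring⟩
  | zero => rw [mul_zero]; exact zero_mem _
  | add y z _ _ hy hz => rw [mul_add]; exact add_mem hy hz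
  | smul c y _ hy => rw [mul_smul_comm]; exact smul_mem _ _ hy

theorem lcsM.mul_mem_right {x : A} (hx : x ∈ lcsM K A k) (r : A) : x * r ∈ lcsM K A k := by
  induction hx using span_induction with
  | mem y hy =>
    obtain ⟨p, q, l, hl, rfl⟩ := hy
    exact subset_span ⟨p, q * r, l, hl, by noncomm_ring⟩
  | zero => rw [zero_mul]; exact zero_mem _
  | add y z _ _ hy hz => rw [add_mul]; exact add_mem hy hz
  | smul c y _ hy => rw [smul_mul_assoc]; exact smul_mem _ _ hy

end LowerCentralSeries

section StarProduct

variable {K A : Type*} [Field K] [Ring A] [Algebra K A]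

theorem starP_comm (a b : A) : starP K a b = starP K b a := by
  rw [starP, starP, add_comm]

theorem starP_sub_starP (a a' b b' : A) :
    starP K a b - starP K a' b' = starP K (a - a') b + starP K a' (b - b') := by
  simp only [starP, ← smul_sub, ← smul_add]
  congr 1
  noncomm_ring

theorem starP_mem_lcsM_of_mem_left {k : ℕ} {a : A} (ha : a ∈ lcsM K A k) (b : A) :
    starP K a b ∈ lcsM K A k :=
  smul_mem _ _ (add_mem (lcsM.mul_mem_right ha b) (lcsM.mul_mem_left ha b))

theorem starP_assoc_sub (a b c : A) :
    starP K (starP K a b) c - starP K a (starP K b c) = (1/4 : K) • ⁅b, ⁅a, c⁆⁆ := by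
  have h : (1/4 : K) = (1/2) * (1/2) := by rw [one_div_mul_one_div]; norm_num
  simp only [starP, Ring.lie_def, smul_mul_assoc, mul_smul_comm, ← smul_add, ← smul_sub, h,
    mul_smul]
  congr 2
  noncomm_ring

end StarProduct

theorem stmt6_general {K A : Type*} [Field K] [Ring A] [Algebra K A] :
    (∀ a a' b b' : A, a - a' ∈ lcsM K A 3 → b - b' ∈ lcsM K A 3 →
        starP K a b - starP K a' b' ∈ lcsM K A 3)
    ∧ (∀ a b c : A, starP K (starP K a b) c - starP K a (starP K b c) ∈ lcsM K A 3)
    ∧ (∀ a b : A, starP K a b = starP K b a) := by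
  refine ⟨fun a a' b b' ha hb => ?_, fun a b c => ?_, starP_comm⟩
  · rw [starP_sub_starP, starP_comm a']
    exact add_mem (starP_mem_lcsM_of_mem_left ha b) (starP_mem_lcsM_of_mem_left hb a')
  · rw [starP_assoc_sub]
    exact smul_mem _ _ (lie_lie_mem_lcsM_three b a c)

/-- the star product descends to a well-defined, associative and commutative
product on `A/M₃`. -/
theorem stmt6 {K A : Type*} [Field K] [CharZero K] [Ring A] [Algebra K A] :
    (∀ a a' b b' : A, a - a' ∈ lcsM K A 3 → b - b' ∈ lcsM K A 3 →
        starP K a b - starP K a' b' ∈ lcsM K A 3)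
    ∧ (∀ a b c : A, starP K (starP K a b) c - starP K a (starP K b c) ∈ lcsM K A 3)
    ∧ (∀ a b : A, starP K a b = starP K b a) :=
  stmt6_general
end

section
/- Let A be an associative algebra over a field of characteristic zero, Mₖ the lower central series ideals. Assume M₃Mₖ ⊆ M_{k+2} and [A,[A,Mₖ]] ⊆ Mₖ₊₁. Then the action a⋆n := (an+na)/2 makes Nₖ := Mₖ/Mₖ₊₁ a module over the commutative algebra A⋆ := (A/M₃, ⋆); in particular (a⋆b)⋆n − a⋆(b⋆n) ∈ Mₖ₊₁ for all a,b ∈ A, n ∈ Mₖ. -/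
open Submodule

variable (K : Type*) (A : Type*)

/-! The associator `(a⋆b)⋆n − a⋆(b⋆n)` of the star product is `¼ [b, [a, n]]`, so the hypothesis
`[A,[A,Mₖ]] ⊆ Mₖ₊₁` puts it in `Mₖ₊₁`. -/

section Ideal

variable {K A : Type*} [CommRing K] [Ring A] [Algebra K A] {k : ℕ} {n : A}

lemma mul_mem_lcsM_left (a : A) (hn : n ∈ lcsM K A k) : a * n ∈ lcsM K A k := by
  induction hn using Submodule.span_induction with
  | mem x hx =>
    obtain ⟨p, q, l, hl, rfl⟩ := hx
    exact Submodule.subset_span ⟨a * p, q, l, hl, by simp only [mul_assoc]⟩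
  | zero => simp
  | add x y _ _ hx hy => rw [mul_add]; exact add_mem hx hy
  | smul c x _ hx => rw [mul_smul_comm]; exact Submodule.smul_mem _ _ hx

lemma mul_mem_lcsM_right (a : A) (hn : n ∈ lcsM K A k) : n * a ∈ lcsM K A k := by
  induction hn using Submodule.span_induction with
  | mem x hx =>
    obtain ⟨p, q, l, hl, rfl⟩ := hx
    exact Submodule.subset_span ⟨p, q * a, l, hl, by simp only [mul_assoc]⟩
  | zero => simp
  | add x y _ _ hx hy => rw [add_mul]; exact add_mem hx hy
  | smul c x _ hx => rw [smul_mul_assoc]; exact Submodule.smul_mem _ _ hx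

end Ideal

section Star

variable {K A : Type*} [Field K] [Ring A] [Algebra K A]

lemma starP_mem_lcsM {k : ℕ} (a : A) {n : A} (hn : n ∈ lcsM K A k) :
    starP K a n ∈ lcsM K A k :=
  Submodule.smul_mem _ _ (add_mem (mul_mem_lcsM_left a hn) (mul_mem_lcsM_right a hn))

lemma starP_starP_sub_starP_starP (a b n : A) :
    starP K (starP K a b) n - starP K a (starP K b n)
      = (1 / 4 : K) • (b * (a * n - n * a) - (a * n - n * a) * b) := by
  have quarter : (1 / 2 : K) * (1 / 2) = 1 / 4 := by rw [div_mul_div_comm]; norm_num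
  simp only [starP, smul_add, smul_mul_assoc, mul_smul_comm, smul_smul, quarter, mul_add,
    add_mul, mul_sub, sub_mul, mul_assoc]
  module

end Star

theorem stmt7_general {K A : Type*} [Field K] [Ring A] [Algebra K A] (k : ℕ)
    (h2 : ∀ a b : A, ∀ n ∈ lcsM K A k,
        a * (b * n - n * b) - (b * n - n * b) * a ∈ lcsM K A (k + 1)) :
    (∀ a : A, ∀ n ∈ lcsM K A k, starP K a n ∈ lcsM K A k)
    ∧ (∀ a b : A, ∀ n ∈ lcsM K A k,
        starP K (starP K a b) n - starP K a (starP K b n) ∈ lcsM K A (k + 1)) := by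
  refine ⟨fun a n hn => starP_mem_lcsM a hn, fun a b n hn => ?_⟩
  rw [starP_starP_sub_starP_starP]
  exact Submodule.smul_mem _ _ (h2 b a n hn)

/-- assuming `M₃Mₖ ⊆ M_{k+2}` and `[A,[A,Mₖ]] ⊆ Mₖ₊₁`, the star action
`a⋆n = (an+na)/2` makes `Nₖ = Mₖ/Mₖ₊₁` a module over `A⋆ = (A/M₃,⋆)`; in particular
`(a⋆b)⋆n − a⋆(b⋆n) ∈ Mₖ₊₁` for `n ∈ Mₖ`. -/
theorem stmt7 {K A : Type*} [Field K] [CharZero K] [Ring A] [Algebra K A] (k : ℕ)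
    (h1 : ∀ x ∈ lcsM K A 3, ∀ n ∈ lcsM K A k, x * n ∈ lcsM K A (k + 2))
    (h2 : ∀ a b : A, ∀ n ∈ lcsM K A k,
        a * (b * n - n * b) - (b * n - n * b) * a ∈ lcsM K A (k + 1)) :
    (∀ a : A, ∀ n ∈ lcsM K A k, starP K a n ∈ lcsM K A k)
    ∧ (∀ a b : A, ∀ n ∈ lcsM K A k,
        starP K (starP K a b) n - starP K a (starP K b n) ∈ lcsM K A (k + 1)) :=
  stmt7_general k h2
end
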